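/- For a finitary coarse space X_G, the following are equivalent: (1) X_G is λ-tight (any two infinite subsets are linked); (2) for any infinite subsets A, B of X there exist a free ultrafilter p and g ∈ G with A ∈ p and B ∈ gp; (3) for any countable family {A_n : n ∈ ω} of infinite subsets of X there exists a free ultrafilter p such that A_n* ∩ Gp ≠ ∅ for each n. -/

import Mathlib

open Set

/-- A coarse structure on a set `X`. -/
structure CoarseStructure (X : Type*) where
  sets : Set (Set (X × X))
  diagonal_mem : ∀ E ∈ sets, ∀ x : X, (x, x) ∈ E
  comp_mem : ∀ E ∈ sets, ∀ E' ∈ sets,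
    {q : X × X | ∃ z : X, (q.1, z) ∈ E ∧ (z, q.2) ∈ E'} ∈ sets
  inv_mem : ∀ E ∈ sets, {q : X × X | (q.2, q.1) ∈ E} ∈ sets
  subset_mem : ∀ E ∈ sets, ∀ E', E' ⊆ E → (∀ x : X, (x, x) ∈ E') → E' ∈ sets
  covers : ⋃₀ sets = Set.univ

/-- The ball `E[A]`. -/
def ball {X : Type*} (E : Set (X × X)) (A : Set X) : Set X := {y | ∃ a ∈ A, (a, y) ∈ E}

/-- A bounded subset of a coarse space. -/
def CoarseStructure.Bounded {X : Type*} (C : CoarseStructure X) (B : Set X) : Prop :=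
  ∃ E ∈ C.sets, ∃ x : X, B ⊆ ball E {x}

/-- A finitary coarse space: uniformly finite balls. -/
def CoarseStructure.Finitary {X : Type*} (C : CoarseStructure X) : Prop :=
  ∀ E ∈ C.sets, ∃ n : ℕ, ∀ x : X, (ball E {x}).Finite ∧ (ball E {x}).ncard < n

/-- The set `X^♯` of ultrafilters all of whose members are unbounded. -/
def CoarseStructure.Sharp {X : Type*} (C : CoarseStructure X) : Set (Ultrafilter X) :=
  {p | ∀ P ∈ p, ¬ C.Bounded P}

/-- The parallelity relation on ultrafilters. -/
def CoarseStructure.Parallel {X : Type*} (C : CoarseStructure X) (p q : Ultrafilter X) : Prop :=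
  ∃ E ∈ C.sets, ∀ P ∈ p, ball E P ∈ q

/-- The entourage determined by a set of permutations. -/
def entourage {X : Type*} (F : Set (Equiv.Perm X)) : Set (X × X) :=
  {q | ∃ g ∈ F, q.2 = g q.1}

/-- The finitary coarse structure `X_G` determined by a group `G` of permutations of `X`:
its entourages are the diagonal-containing subsets of `{(x,gx) : x ∈ X, g ∈ F}`
for finite `F ⊆ G` with `id ∈ F`. -/
def XGsets {X : Type*} (G : Subgroup (Equiv.Perm X)) : Set (Set (X × X)) :=
  {E | (∀ x : X, (x, x) ∈ E) ∧ ∃ F : Finset (Equiv.Perm X),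
    (1 : Equiv.Perm X) ∈ F ∧ ↑F ⊆ (G : Set (Equiv.Perm X)) ∧ E ⊆ entourage ↑F}

/-- A free ultrafilter. -/
def IsFree {X : Type*} (p : Ultrafilter X) : Prop := (p : Filter X) ≤ Filter.cofinite

/-- `X*`, the space of free ultrafilters with the Stone topology. -/
def FreeUF (X : Type*) : Type _ := {p : Ultrafilter X // IsFree p}

instance (X : Type*) : TopologicalSpace (FreeUF X) :=
  instTopologicalSpaceSubtype

/-- The orbit `Gp` of an ultrafilter under the induced action `gp = {gP : P ∈ p}`. -/
def ufOrbit {X : Type*} (G : Subgroup (Equiv.Perm X)) (p : Ultrafilter X) :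
    Set (Ultrafilter X) :=
  {q | ∃ g ∈ G, q = Ultrafilter.map (⇑g) p}

/-- The `p`-companion `Δ_p(A) = A* ∩ Gp`. -/
def compan {X : Type*} (G : Subgroup (Equiv.Perm X)) (p : Ultrafilter X) (A : Set X) :
    Set (Ultrafilter X) :=
  {q | A ∈ q ∧ q ∈ ufOrbit G p}

/-- Large subsets of `X_G`. -/
def IsLarge {X : Type*} (G : Subgroup (Equiv.Perm X)) (A : Set X) : Prop :=
  ∃ E ∈ XGsets G, ball E A = Set.univ

/-- Thick subsets of `X_G`. -/
def IsThick {X : Type*} (G : Subgroup (Equiv.Perm X)) (A : Set X) : Prop :=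
  ∀ E ∈ XGsets G, ∃ a ∈ A, ball E {a} ⊆ A

/-- Thin (discrete) subsets of `X_G`. -/
def IsThin {X : Type*} (G : Subgroup (Equiv.Perm X)) (A : Set X) : Prop :=
  ∀ E ∈ XGsets G, ∃ B : Set X, B.Finite ∧ ∀ a ∈ A \ B, ball E {a} ∩ A = {a}

/-- Sparse subsets of `X_G`. -/
def IsSparse {X : Type*} (G : Subgroup (Equiv.Perm X)) (A : Set X) : Prop :=
  ∀ p : Ultrafilter X, IsFree p → (compan G p A).Finite

/-- Scattered subsets of `X_G`. -/
def IsScattered {X : Type*} (G : Subgroup (Equiv.Perm X)) (A : Set X) : Prop :=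
  ∀ Y ⊆ A, Y.Infinite →
    ∃ p : Ultrafilter X, IsFree p ∧ Y ∈ p ∧ (compan G p Y).Finite

/-- Close subsets of a coarse space. -/
def CoarseStructure.Close {X : Type*} (C : CoarseStructure X) (A B : Set X) : Prop :=
  ∃ E ∈ C.sets, A ⊆ ball E B ∧ B ⊆ ball E A

/-- Close subsets of `X_G`. -/
def CloseG {X : Type*} (G : Subgroup (Equiv.Perm X)) (A B : Set X) : Prop :=
  ∃ E ∈ XGsets G, A ⊆ ball E B ∧ B ⊆ ball E A

/-- Linked subsets of `X_G`. -/
def LinkedG {X : Type*} (G : Subgroup (Equiv.Perm X)) (A B : Set X) : Prop :=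
  (A.Finite ∧ B.Finite) ∨
    ∃ A' ⊆ A, ∃ B' ⊆ B, A'.Infinite ∧ B'.Infinite ∧ CloseG G A' B'


open Set

/-- The `n`-th block `{g_0^{ε_0} ⋯ g_n^{ε_n} x_n : ε_i ∈ {0,1}}`. -/
def pwBlock {X : Type*} (g : ℕ → Equiv.Perm X) (x : ℕ → X) (n : ℕ) : Set X :=
  {y | ∃ ε : Fin (n + 1) → Bool,
    y = ((List.ofFn fun i : Fin (n + 1) =>
      (g i) ^ (if ε i then 1 else 0)).prod : Equiv.Perm X) (x n)}

/-- A piece-wise shifted FP-set determined by the group `G`. -/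
def IsPWShiftedFP {X : Type*} (G : Subgroup (Equiv.Perm X)) (Y : Set X) : Prop :=
  ∃ g : ℕ → Equiv.Perm X, ∃ x : ℕ → X,
    (∀ n, g n ∈ G) ∧
    (∀ m n, m ≠ n → Disjoint (pwBlock g x m) (pwBlock g x n)) ∧
    (∀ n, (pwBlock g x n).ncard = 2 ^ (n + 1)) ∧
    Y = ⋃ n, pwBlock g x n

/-- The group of all self-homeomorphisms of a topological space, as a subgroup
of the permutation group. -/
def homeoSubgroup (X : Type*) [TopologicalSpace X] : Subgroup (Equiv.Perm X) where
  carrier := {g | Continuous g ∧ Continuous g.symm}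
  one_mem' := ⟨continuous_id, continuous_id⟩
  mul_mem' := by
    rintro a b ⟨ha1, ha2⟩ ⟨hb1, hb2⟩
    refine ⟨?_, ?_⟩
    · simpa [Equiv.Perm.mul_def, Equiv.coe_trans] using ha1.comp hb1
    · simpa [Equiv.Perm.mul_def, Equiv.symm_trans_apply] using (hb2.comp ha2 : _)
  inv_mem' := by
    rintro a ⟨ha1, ha2⟩
    exact ⟨ha2, by simpa [Equiv.Perm.inv_def] using ha1⟩


/-- The parallelity relation on ultrafilters over the coarse space `X_G`. -/
def ParallelG {X : Type*} (G : Subgroup (Equiv.Perm X)) (p q : Ultrafilter X) : Prop :=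
  ∃ E ∈ XGsets G, ∀ P ∈ p, ball E P ∈ q

/-- Linked subsets of a coarse space. -/
def CoarseStructure.Linked {X : Type*} (C : CoarseStructure X) (A B : Set X) : Prop :=
  (C.Bounded A ∧ C.Bounded B) ∨
    ∃ A' ⊆ A, ∃ B' ⊆ B, ¬ C.Bounded A' ∧ ¬ C.Bounded B' ∧ C.Close A' B'

/-- The orbit `Gp` viewed as a subset of the space `X*` of free ultrafilters. -/
def freeOrbit {X : Type*} (G : Subgroup (Equiv.Perm X)) (p : Ultrafilter X) :
    Set (FreeUF X) :=
  {q | q.1 ∈ ufOrbit G p}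


/-! Both λ-tightness and (2) say that any two infinite sets `A`, `B` admit `g ∈ G` with
`A ∩ g⁻¹B` infinite: a closeness witness for infinite `A' ⊆ A`, `B' ⊆ B` is a finite set of
permutations covering `A'` by translates of `B'`, so one translate meets `A'` infinitely, and
conversely `A ∩ g⁻¹B` is close to its image under `g`. Iterating this on a countable family
gives a decreasing sequence `P₀ ⊇ P₁ ⊇ ⋯` of infinite sets with `g_n P_{n+1} ⊆ A_n`; any free
ultrafilter containing every `P_n` works for (3). -/

open Filter

section FreeUltrafilters

variable {X : Type*}

theorem exists_isFree_mem {S : Set X} (hS : S.Infinite) : ∃ p : Ultrafilter X, IsFree p ∧ S ∈ p :=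
  have := hS.cofinite_inf_principal_neBot
  ⟨Ultrafilter.of (cofinite ⊓ 𝓟 S), (Ultrafilter.of_le _).trans inf_le_left,
    Ultrafilter.of_le _ (mem_inf_of_right (mem_principal_self S))⟩

theorem IsFree.infinite_of_mem {p : Ultrafilter X} (hp : IsFree p) {S : Set X} (hS : S ∈ p) :
    S.Infinite := fun hfin => Ultrafilter.compl_notMem_iff.2 hS (hp hfin.compl_mem_cofinite)

theorem IsFree.map {Y : Type*} {p : Ultrafilter X} (hp : IsFree p) {f : X → Y}
    (hf : f.Injective) : IsFree (p.map f) :=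
  (Filter.map_mono hp).trans hf.tendsto_cofinite

theorem exists_isFree_forall_mem_of_antitone {ι : Type*} [Preorder ι] [IsDirectedOrder ι]
    [Nonempty ι] {P : ι → Set X} (hP : Antitone P) (hinf : ∀ i, (P i).Infinite) :
    ∃ p : Ultrafilter X, IsFree p ∧ ∀ i, P i ∈ p := by
  have hdir : Directed (· ≥ ·) fun i => cofinite ⊓ 𝓟 (P i) :=
    Antitone.directed_ge fun _ _ hij => inf_le_inf_left _ (principal_mono.2 (hP hij))
  have := iInf_neBot_of_directed' hdir fun i => (hinf i).cofinite_inf_principal_neBot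
  exact ⟨Ultrafilter.of (⨅ i, cofinite ⊓ 𝓟 (P i)),
    (Ultrafilter.of_le _).trans ((iInf_le _ (Classical.arbitrary ι)).trans inf_le_left),
    fun i => Ultrafilter.of_le _ (mem_iInf_of_mem i (mem_inf_of_right (mem_principal_self _)))⟩

end FreeUltrafilters

section PermutationGroup

variable {X : Type*} {G : Subgroup (Equiv.Perm X)}

theorem entourage_mem_XGsets {F : Finset (Equiv.Perm X)} (h1 : 1 ∈ F)
    (hFG : ↑F ⊆ (G : Set (Equiv.Perm X))) : entourage ↑F ∈ XGsets G :=
  ⟨fun _ => ⟨1, h1, rfl⟩, F, h1, hFG, subset_rfl⟩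

theorem closeG_image {g : Equiv.Perm X} (hg : g ∈ G) (C : Set X) : CloseG G C (g '' C) := by
  classical
  refine ⟨entourage ↑({1, g, g⁻¹} : Finset (Equiv.Perm X)),
    entourage_mem_XGsets (by simp) ?_, fun c hc => ?_, ?_⟩
  · intro h hh
    simp only [Finset.coe_insert, Finset.coe_singleton, mem_insert_iff, mem_singleton_iff] at hh
    rcases hh with rfl | rfl | rfl
    exacts [G.one_mem, hg, G.inv_mem hg]
  · exact ⟨g c, mem_image_of_mem g hc, g⁻¹, by simp, by simp⟩
  · rintro _ ⟨c, hc, rfl⟩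
    exact ⟨c, hc, g, by simp, rfl⟩

theorem CloseG.exists_infinite_inter_preimage {A B : Set X} (h : CloseG G A B)
    (hA : A.Infinite) : ∃ g ∈ G, (A ∩ g ⁻¹' B).Infinite := by
  obtain ⟨E, ⟨-, F, -, hFG, hEF⟩, hAB, -⟩ := h
  have hcover : A ⊆ ⋃ g ∈ F, A ∩ ⇑g⁻¹ ⁻¹' B := by
    intro a ha
    obtain ⟨b, hb, hab⟩ := hAB ha
    obtain ⟨g, hg, hga : a = g b⟩ := hEF hab
    exact mem_biUnion hg ⟨ha, by simpa [hga] using hb⟩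
  by_contra! hfin
  exact hA ((F.finite_toSet.biUnion fun g hg => hfin _ (G.inv_mem (hFG hg))).subset hcover)

theorem linkedG_iff_exists_infinite_inter_preimage {A B : Set X} (hA : A.Infinite) :
    LinkedG G A B ↔ ∃ g ∈ G, (A ∩ g ⁻¹' B).Infinite := by
  constructor
  · rintro (⟨hAfin, -⟩ | ⟨A', hA'A, B', hB'B, hA', -, hclose⟩)
    · exact absurd hAfin hA
    obtain ⟨g, hg, hinf⟩ := hclose.exists_infinite_inter_preimage hA'
    exact ⟨g, hg, hinf.mono (inter_subset_inter hA'A (preimage_mono hB'B))⟩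
  · rintro ⟨g, hg, hinf⟩
    exact Or.inr ⟨_, inter_subset_left, g '' (A ∩ g ⁻¹' B), image_subset_iff.2 inter_subset_right,
      hinf, hinf.image g.injective.injOn, closeG_image hg _⟩

theorem exists_isFree_mem_map_iff {A B : Set X} :
    (∃ p : Ultrafilter X, IsFree p ∧ ∃ g ∈ G, A ∈ p ∧ B ∈ p.map g) ↔
      ∃ g ∈ G, (A ∩ g ⁻¹' B).Infinite := by
  constructor
  · rintro ⟨p, hp, g, hg, hA, hB⟩
    exact ⟨g, hg, hp.infinite_of_mem (inter_mem hA hB)⟩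
  · rintro ⟨g, hg, hinf⟩
    obtain ⟨p, hp, hmem⟩ := exists_isFree_mem hinf
    exact ⟨p, hp, g, hg, mem_of_superset hmem inter_subset_left,
      Ultrafilter.mem_map.2 (mem_of_superset hmem inter_subset_right)⟩

theorem mem_ufOrbit_of_mem_ufOrbit {p q r : Ultrafilter X} (hq : q ∈ ufOrbit G p)
    (hr : r ∈ ufOrbit G p) : r ∈ ufOrbit G q := by
  obtain ⟨g, hg, rfl⟩ := hq
  obtain ⟨h, hh, rfl⟩ := hr
  refine ⟨h * g⁻¹, G.mul_mem hh (G.inv_mem hg), ?_⟩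
  rw [Ultrafilter.map_map]
  congr
  ext x
  simp

theorem exists_isFree_forall_exists_mem_ufOrbit {A : ℕ → Set X} (hA : ∀ n, (A n).Infinite)
    (h : ∀ C : Set X, C.Infinite → ∀ n, ∃ g ∈ G, (C ∩ g ⁻¹' A n).Infinite) :
    ∃ p : Ultrafilter X, IsFree p ∧ ∀ n, ∃ q ∈ ufOrbit G p, A n ∈ q := by
  choose g hgG hg using h
  let P : ℕ → {C : Set X // C.Infinite} := fun n =>
    Nat.rec ⟨A 0, hA 0⟩ (fun n C => ⟨C.1 ∩ g C.1 C.2 n ⁻¹' A n, hg _ _ _⟩) n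
  have hP : Antitone fun n => (P n).1 := antitone_nat_of_succ_le fun _ => inter_subset_left
  obtain ⟨p, hp, hPp⟩ := exists_isFree_forall_mem_of_antitone hP fun n => (P n).2
  refine ⟨p, hp, fun n => ⟨p.map (g (P n).1 (P n).2 n), ⟨_, hgG _ _ _, rfl⟩, ?_⟩⟩
  exact Ultrafilter.mem_map.2 (mem_of_superset (hPp (n + 1)) inter_subset_right)

end PermutationGroup

theorem lambdaTight_tfae_general {X : Type*}
    (G : Subgroup (Equiv.Perm X)) :
    List.TFAE [
      ∀ A B : Set X, A.Infinite → B.Infinite → LinkedG G A B,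
      ∀ A B : Set X, A.Infinite → B.Infinite →
        ∃ p : Ultrafilter X, IsFree p ∧ ∃ g ∈ G, A ∈ p ∧ B ∈ Ultrafilter.map (⇑g) p,
      ∀ A : ℕ → Set X, (∀ n, (A n).Infinite) →
        ∃ p : Ultrafilter X, IsFree p ∧ ∀ n, ∃ q ∈ ufOrbit G p, A n ∈ q ] := by
  tfae_have 1 ↔ 2 := forall₄_congr fun _ _ hA _ =>
    (linkedG_iff_exists_infinite_inter_preimage hA).trans exists_isFree_mem_map_iff.symm
  tfae_have 2 → 3 := fun h2 A hA => exists_isFree_forall_exists_mem_ufOrbit hA fun C hC n =>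
    exists_isFree_mem_map_iff.1 (h2 C (A n) hC (hA n))
  tfae_have 3 → 2 := by
    intro h3 A B hA hB
    obtain ⟨p, hp, hAB⟩ := h3 (fun n => if n = 0 then A else B) fun n => by
      split_ifs <;> assumption
    obtain ⟨q, hq, hAq⟩ := hAB 0
    obtain ⟨r, hr, hBr⟩ := hAB 1
    obtain ⟨g, hg, rfl⟩ := mem_ufOrbit_of_mem_ufOrbit hq hr
    obtain ⟨g₀, -, rfl⟩ := hq
    exact ⟨_, hp.map g₀.injective, g, hg, hAq, hBr⟩
  tfae_finish

/-- TFAE for a finitary coarse space `X_G` on a countably infinite set: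
(1) `X_G` is λ-tight; (2) for any infinite `A, B ⊆ X` there are a free ultrafilter `p`
and `g ∈ G` with `A ∈ p` and `B ∈ gp`; (3) for any countable family of infinite sets
`A n` there is a free ultrafilter `p` with `(A n)* ∩ Gp ≠ ∅` for each `n`. -/
theorem lambdaTight_tfae {X : Type*} [Countable X] [Infinite X]
    (G : Subgroup (Equiv.Perm X)) :
    List.TFAE [
      ∀ A B : Set X, A.Infinite → B.Infinite → LinkedG G A B,
      ∀ A B : Set X, A.Infinite → B.Infinite →
        ∃ p : Ultrafilter X, IsFree p ∧ ∃ g ∈ G, A ∈ p ∧ B ∈ Ultrafilter.map (⇑g) p,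
      ∀ A : ℕ → Set X, (∀ n, (A n).Infinite) →
        ∃ p : Ultrafilter X, IsFree p ∧ ∀ n, ∃ q ∈ ufOrbit G p, A n ∈ q ] :=
  lambdaTight_tfae_general G
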